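/- Let Z be a Banach space and K ⊆ Y ⊆ Z closed subspaces. Suppose P is a Banach space with bounded operators J : Y → P, E : Z → P, Q : P → Z/K such that J is injective, Q is surjective with kernel equal to the range of J, Q∘E equals the quotient map Z → Z/K, and E restricted to K equals J restricted to K. If moreover P = J[Y] + E[Z], then the map U : Y/K ⊕ Z → P given by U(y + K, z) = J(y) + E(z − y) is a well-defined linear isomorphism (bounded bijection with bounded inverse). -/

import Mathlib

set_option maxHeartbeats 1000000


/-- If `K ⊆ Y ⊆ Z` are closed subspaces of a Banach space `Z`, `P` is a Banach space fitting
into a commutative diagram with `J : Y → P`, `E : Z → P`, `Q : P → Z/K` as in the pushout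
lemma, and `P = J[Y] + E[Z]`, then `U(y + K, z) = J(y) + E(z - y)` is a well-defined linear
isomorphism `Y/K ⊕ Z ≃ P`. -/
theorem pushout_decomposition (Z : Type*) [NormedAddCommGroup Z] [NormedSpace ℝ Z]
    [CompleteSpace Z]
    (P : Type*) [NormedAddCommGroup P] [NormedSpace ℝ P] [CompleteSpace P]
    (K Y : Submodule ℝ Z) (hKY : K ≤ Y)
    (hKcl : IsClosed (K : Set Z)) (hYcl : IsClosed (Y : Set Z))
    (J : Y →L[ℝ] P) (E : Z →L[ℝ] P) (Q : P →L[ℝ] Z ⧸ K)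
    (hJinj : Function.Injective J) (hQsurj : Function.Surjective Q)
    (hexact : LinearMap.ker (Q : P →ₗ[ℝ] Z ⧸ K) = LinearMap.range (J : Y →ₗ[ℝ] P))
    (hQE : ∀ z : Z, Q (E z) = Submodule.Quotient.mk z)
    (hJE : ∀ k : Z, ∀ hk : k ∈ K, E k = J ⟨k, hKY hk⟩)
    (hsum : ∀ p : P, ∃ (y : Y) (z : Z), p = J y + E z) :
    ∃ U : ((Y ⧸ K.comap Y.subtype) × Z) ≃L[ℝ] P,
      ∀ (y : Y) (z : Z),
        U (Submodule.Quotient.mk y, z) = J y + E ((z : Z) - (y : Z)) := by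
  haveI : CompleteSpace Y := hYcl.completeSpace_coe
  set K' : Submodule ℝ Y := K.comap Y.subtype with hK'
  -- T y = J y - E y, vanishes on K'
  set T : Y →L[ℝ] P := J - E.comp Y.subtypeL with hT
  have hTK : K' ≤ LinearMap.ker (T : Y →ₗ[ℝ] P) := by
    intro x hx
    have hxK : (x : Z) ∈ K := hx
    simp [hT, LinearMap.mem_ker, hJE (x : Z) hxK]
  -- lift T to the quotient
  let Tbarₗ : (Y ⧸ K') →ₗ[ℝ] P := K'.liftQ (T : Y →ₗ[ℝ] P) hTK
  have hTbar_cont : Continuous Tbarₗ :=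
    (QuotientAddGroup.isQuotientMap_mk (K'.toAddSubgroup)).continuous_iff.mpr T.continuous
  let Tbar : (Y ⧸ K') →L[ℝ] P := ⟨Tbarₗ, hTbar_cont⟩
  have hTbar_mk : ∀ y : Y, Tbar (Submodule.Quotient.mk y) = J y - E (y : Z) := by
    intro y; simp [Tbar, Tbarₗ, hT]
  -- the map U as a continuous linear map
  let L : ((Y ⧸ K') × Z) →L[ℝ] P :=
    Tbar.comp (ContinuousLinearMap.fst ℝ _ _) + E.comp (ContinuousLinearMap.snd ℝ _ _)
  have hL : ∀ (y : Y) (z : Z),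
      L (Submodule.Quotient.mk y, z) = J y + E ((z : Z) - (y : Z)) := by
    intro y z
    simp [L, hTbar_mk, map_sub]
    abel
  -- injectivity
  have hinj : LinearMap.ker (L : ((Y ⧸ K') × Z) →ₗ[ℝ] P) = ⊥ := by
    rw [LinearMap.ker_eq_bot']
    rintro ⟨q, z⟩ h
    obtain ⟨y, rfl⟩ := Submodule.Quotient.mk_surjective K' q
    have h0 : J y + E (z - (y : Z)) = 0 := by rw [← hL y z]; exact h
    have hQ0 : Q (J y) = 0 := by
      have : J y ∈ LinearMap.ker (Q : P →ₗ[ℝ] Z ⧸ K) := by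
        rw [hexact]; exact ⟨y, rfl⟩
      exact this
    have hzK : z - (y : Z) ∈ K := by
      have : Q (J y + E (z - (y : Z))) = 0 := by rw [h0]; simp
      rw [map_add, hQ0, zero_add, hQE] at this
      exact (Submodule.Quotient.mk_eq_zero K).mp this
    have hEz : E (z - (y : Z)) = J ⟨z - (y : Z), hKY hzK⟩ := hJE _ hzK
    have hsumJ : J (y + ⟨z - (y : Z), hKY hzK⟩) = 0 := by
      rw [map_add, ← hEz]; exact h0
    have hy0 : y + (⟨z - (y : Z), hKY hzK⟩ : Y) = 0 := by
      apply hJinj; rw [hsumJ, map_zero]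
    have hz0 : z = 0 := by
      have := congrArg (Subtype.val) hy0
      simpa using this
    subst hz0
    have hyK : y ∈ K' := by
      have : (0 : Z) - (y : Z) ∈ K := hzK
      simpa [hK'] using (by simpa using this : -(y : Z) ∈ K)
    exact Prod.ext ((Submodule.Quotient.mk_eq_zero K').mpr hyK) rfl
  -- surjectivity
  have hsurj : LinearMap.range (L : ((Y ⧸ K') × Z) →ₗ[ℝ] P) = ⊤ := by
    rw [LinearMap.range_eq_top]
    intro p
    obtain ⟨y, z, rfl⟩ := hsum p
    refine ⟨(Submodule.Quotient.mk y, z + (y : Z)), ?_⟩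
    rw [ContinuousLinearMap.coe_coe, hL]
    simp
  haveI : IsClosed (K' : Set Y) := hKcl.preimage continuous_subtype_val
  refine ⟨?_, ?_⟩
  · exact ContinuousLinearEquiv.ofBijective L hinj hsurj
  · exact fun y z => hL y z
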